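/- Let G₁ and G₂ be finite connected simple graphs with n₁ and n₂ vertices, distance matrices D₁, D₂, and nonnegative curvatures w₁, w₂ (Dᵢwᵢ = nᵢ·𝟏, wᵢ ≥ 0 entrywise). Let G be the graph obtained by adding an edge {u,v} between G₁ and G₂ with u ∈ V(G₁), v ∈ V(G₂). Then G has a curvature w with D_G w = (n₁+n₂)·𝟏 whose value at u equals [‖w₂‖₁(n₁+n₂) / (n₁‖w₂‖₁ + n₂‖w₁‖₁ + ½‖w₁‖₁‖w₂‖₁)] · (w₁(u) − ½‖w₁‖₁) and whose value at v equals [‖w₁‖₁(n₁+n₂) / (n₁‖w₂‖₁ + n₂‖w₁‖₁ + ½‖w₁‖₁‖w₂‖₁)] · (w₂(v) − ½‖w₂‖₁), and whose value at every other vertex x is a positive multiple of w₁(x) (if x ∈ V(G₁)) or of w₂(x) (if x ∈ V(G₂)). -/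

import Mathlib

/-- The graph obtained by adding an edge between the vertex `u` of `G₁` and the
vertex `v` of `G₂` (the graphs being on disjoint vertex sets). -/
def bridgeGraph {V₁ V₂ : Type*} (G₁ : SimpleGraph V₁) (G₂ : SimpleGraph V₂)
    (u : V₁) (v : V₂) : SimpleGraph (V₁ ⊕ V₂) :=
  SimpleGraph.fromRel (fun x y =>
    (∃ a b, x = Sum.inl a ∧ y = Sum.inl b ∧ G₁.Adj a b) ∨
    (∃ a b, x = Sum.inr a ∧ y = Sum.inr b ∧ G₂.Adj a b) ∨
    (x = Sum.inl u ∧ y = Sum.inr v))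

/-!
Inside each side the bridged graph keeps the distances of `Gᵢ`, and across the bridge the
distance is `d₁(a, u) + 1 + d₂(v, b)`: walks give the upper bound, and the lower bound holds
because this formula, as a function of its first argument, drops by at most one along each edge.
Hence for `w = (x₁, x₂)` one gets `(D w)(a) = (D₁ x₁)(a) + (d₁(a, u) + 1) Σ x₂ + (D₂ x₂)(v)`.
Take `x₁ = c₁ w₁ - (c₁ L₁ / 2) e_u` and `x₂ = c₂ w₂ - (c₂ L₂ / 2) e_v`: the terms proportional to
`d₁(a, u)` cancel as soon as `c₁ L₁ = c₂ L₂`, and what remains is the constant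
`c₁ n₁ + c₂ n₂ + c₁ L₁ / 2`, which the normalisation of the `cᵢ` makes equal to `n₁ + n₂`.
Nonnegativity of `wᵢ` is what gives `Lᵢ = Σ wᵢ > 0`.
-/

open Finset Matrix Sum

namespace SimpleGraph

variable {V : Type*} {G : SimpleGraph V}

noncomputable def distMatrix (G : SimpleGraph V) : Matrix V V ℝ :=
  Matrix.of fun a b => (G.dist a b : ℝ)

lemma Reachable.dist_map_le {V' : Type*} {G' : SimpleGraph V'} (f : G →g G') {a b : V}
    (h : G.Reachable a b) : G'.dist (f a) (f b) ≤ G.dist a b := by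
  obtain ⟨p, hp⟩ := h.exists_walk_length_eq_dist
  simpa [hp] using dist_le (p.map f)

lemma Adj.dist_le_dist_add_one {a b : V} (h : G.Adj a b) (c : V) :
    G.dist a c ≤ G.dist b c + 1 := by
  have := h.reachable.dist_triangle_left c
  rw [dist_eq_one_iff_adj.mpr h] at this
  omega

lemma Reachable.le_dist_add (φ : V → ℕ) (hφ : ∀ x y, G.Adj x y → φ x ≤ φ y + 1) {x z : V}
    (h : G.Reachable x z) : φ x ≤ G.dist x z + φ z := by
  obtain ⟨p, hp⟩ := h.exists_walk_length_eq_dist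
  rw [← hp]
  clear hp h
  induction p with
  | nil => simp
  | cons hadj p ih =>
    have := hφ _ _ hadj
    rw [Walk.length_cons]
    omega

lemma distMatrix_mulVec_smul_sub_single [Fintype V] [DecidableEq V] (w : V → ℝ) (c t : ℝ)
    (a b : V) :
    (G.distMatrix *ᵥ (c • w - Pi.single b t)) a = c * (G.distMatrix *ᵥ w) a - G.dist a b * t := by
  simp [mulVec_sub, mulVec_smul, mulVec_single, distMatrix, mul_comm]

end SimpleGraph

lemma sum_smul_sub_single {V : Type*} [Fintype V] [DecidableEq V] (c t : ℝ) (w : V → ℝ) (a : V) :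
    ∑ b, (c • w - Pi.single a t : V → ℝ) b = c * ∑ b, w b - t := by
  simp [sum_sub_distrib, mul_sum]

lemma sum_pos_of_mulVec_eq_const {V : Type*} [Fintype V] [Nonempty V] {M : Matrix V V ℝ}
    {w : V → ℝ} {n : ℝ} (hw0 : ∀ i, 0 ≤ w i) (hw : M *ᵥ w = fun _ => n) (hn : n ≠ 0) :
    0 < ∑ i, w i := by
  refine (sum_nonneg fun i _ => hw0 i).lt_of_ne fun hsum => hn ?_
  have hw_zero : w = 0 :=
    funext fun i => (sum_eq_zero_iff_of_nonneg fun i _ => hw0 i).mp hsum.symm i (mem_univ i)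
  obtain ⟨i⟩ := ‹Nonempty V›
  simpa [hw_zero] using (congrFun hw i).symm

open SimpleGraph

section Bridge

variable {V₁ V₂ : Type*} {G₁ : SimpleGraph V₁} {G₂ : SimpleGraph V₂} {u : V₁} {v : V₂}

@[simp] lemma bridgeGraph_adj_inl_inl {a b : V₁} :
    (bridgeGraph G₁ G₂ u v).Adj (inl a) (inl b) ↔ G₁.Adj a b := by
  simp [bridgeGraph, adj_comm]
  exact fun h => h.ne

@[simp] lemma bridgeGraph_adj_inr_inr {a b : V₂} :
    (bridgeGraph G₁ G₂ u v).Adj (inr a) (inr b) ↔ G₂.Adj a b := by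
  simp [bridgeGraph, adj_comm]
  exact fun h => h.ne

@[simp] lemma bridgeGraph_adj_inl_inr {a : V₁} {b : V₂} :
    (bridgeGraph G₁ G₂ u v).Adj (inl a) (inr b) ↔ a = u ∧ b = v := by
  simp [bridgeGraph]

@[simp] lemma bridgeGraph_adj_inr_inl {a : V₁} {b : V₂} :
    (bridgeGraph G₁ G₂ u v).Adj (inr b) (inl a) ↔ a = u ∧ b = v := by
  rw [adj_comm, bridgeGraph_adj_inl_inr]

def bridgeGraph.inlHom : G₁ →g bridgeGraph G₁ G₂ u v := ⟨inl, bridgeGraph_adj_inl_inl.mpr⟩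

def bridgeGraph.inrHom : G₂ →g bridgeGraph G₁ G₂ u v := ⟨inr, bridgeGraph_adj_inr_inr.mpr⟩

lemma bridgeGraph_connected (hG₁ : G₁.Connected) (hG₂ : G₂.Connected) :
    (bridgeGraph G₁ G₂ u v).Connected := by
  have hbridge : (bridgeGraph G₁ G₂ u v).Adj (inl u) (inr v) := by simp
  have hroot : ∀ x, (bridgeGraph G₁ G₂ u v).Reachable (inl u) x := by
    rintro (a | b)
    · exact (hG₁.preconnected u a).map bridgeGraph.inlHom
    · exact hbridge.reachable.trans ((hG₂.preconnected v b).map bridgeGraph.inrHom)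
  have : Nonempty (V₁ ⊕ V₂) := ⟨inl u⟩
  exact ⟨fun x y => (hroot x).symm.trans (hroot y)⟩

variable (G₁ G₂ u v) in
noncomputable def bridgeDist : V₁ ⊕ V₂ → V₁ ⊕ V₂ → ℕ
  | inl a, inl b => G₁.dist a b
  | inl a, inr b => G₁.dist a u + 1 + G₂.dist v b
  | inr a, inl b => G₂.dist a v + 1 + G₁.dist u b
  | inr a, inr b => G₂.dist a b

lemma bridgeDist_le_bridgeDist_add_one {x y : V₁ ⊕ V₂} (h : (bridgeGraph G₁ G₂ u v).Adj x y)
    (z : V₁ ⊕ V₂) : bridgeDist G₁ G₂ u v x z ≤ bridgeDist G₁ G₂ u v y z + 1 := by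
  rcases x with a | a <;> rcases y with b | b
  · have := (bridgeGraph_adj_inl_inl.mp h).dist_le_dist_add_one
    rcases z with c | c <;> simp only [bridgeDist] <;> grind
  · obtain ⟨rfl, rfl⟩ := bridgeGraph_adj_inl_inr.mp h
    rcases z with c | c <;> simp only [bridgeDist, dist_self] <;> omega
  · obtain ⟨rfl, rfl⟩ := bridgeGraph_adj_inr_inl.mp h
    rcases z with c | c <;> simp only [bridgeDist, dist_self] <;> omega
  · have := (bridgeGraph_adj_inr_inr.mp h).dist_le_dist_add_one
    rcases z with c | c <;> simp only [bridgeDist] <;> grind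

lemma dist_bridgeGraph_le (hG₁ : G₁.Connected) (hG₂ : G₂.Connected) (x y : V₁ ⊕ V₂) :
    (bridgeGraph G₁ G₂ u v).dist x y ≤ bridgeDist G₁ G₂ u v x y := by
  have hl (a b : V₁) : (bridgeGraph G₁ G₂ u v).dist (inl a) (inl b) ≤ G₁.dist a b :=
    (hG₁.preconnected a b).dist_map_le bridgeGraph.inlHom
  have hr (a b : V₂) : (bridgeGraph G₁ G₂ u v).dist (inr a) (inr b) ≤ G₂.dist a b :=
    (hG₂.preconnected a b).dist_map_le bridgeGraph.inrHom
  have hlr (a : V₁) (b : V₂) :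
      (bridgeGraph G₁ G₂ u v).dist (inl a) (inr b) ≤ G₁.dist a u + 1 + G₂.dist v b := by
    have hconn := bridgeGraph_connected (u := u) (v := v) hG₁ hG₂
    have hbridge : (bridgeGraph G₁ G₂ u v).dist (inl u) (inr v) = 1 := by simp
    have := hconn.dist_triangle (u := inl a) (v := inl u) (w := inr b)
    have := hconn.dist_triangle (u := inl u) (v := inr v) (w := inr b)
    grind
  rcases x with a | a <;> rcases y with b | b
  · exact hl a b
  · exact hlr a b
  · have := hlr b a
    rw [dist_comm]
    simp only [bridgeDist]
    grind [SimpleGraph.dist_comm]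
  · exact hr a b

lemma dist_bridgeGraph (hG₁ : G₁.Connected) (hG₂ : G₂.Connected) (x y : V₁ ⊕ V₂) :
    (bridgeGraph G₁ G₂ u v).dist x y = bridgeDist G₁ G₂ u v x y := by
  refine le_antisymm (dist_bridgeGraph_le hG₁ hG₂ x y) ?_
  have := ((bridgeGraph_connected hG₁ hG₂).preconnected x y).le_dist_add
    (bridgeDist G₁ G₂ u v · y) fun _ _ h => bridgeDist_le_bridgeDist_add_one h y
  rcases y with b | b <;> simpa [bridgeDist] using this

variable [Fintype V₁] [Fintype V₂]

lemma distMatrix_bridgeGraph_mulVec_inl (hG₁ : G₁.Connected) (hG₂ : G₂.Connected)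
    (x₁ : V₁ → ℝ) (x₂ : V₂ → ℝ) (a : V₁) :
    (distMatrix (bridgeGraph G₁ G₂ u v) *ᵥ Sum.elim x₁ x₂) (inl a)
      = (distMatrix G₁ *ᵥ x₁) a + (G₁.dist a u + 1) * ∑ b, x₂ b + (distMatrix G₂ *ᵥ x₂) v := by
  simp only [mulVec, dotProduct, distMatrix, of_apply, Fintype.sum_sum_type, elim_inl, elim_inr,
    dist_bridgeGraph hG₁ hG₂, bridgeDist]
  push_cast
  simp only [add_mul, sum_add_distrib, mul_sum]
  ring

lemma distMatrix_bridgeGraph_mulVec_inr (hG₁ : G₁.Connected) (hG₂ : G₂.Connected)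
    (x₁ : V₁ → ℝ) (x₂ : V₂ → ℝ) (b : V₂) :
    (distMatrix (bridgeGraph G₁ G₂ u v) *ᵥ Sum.elim x₁ x₂) (inr b)
      = (distMatrix G₂ *ᵥ x₂) b + (G₂.dist b v + 1) * ∑ a, x₁ a + (distMatrix G₁ *ᵥ x₁) u := by
  simp only [mulVec, dotProduct, distMatrix, of_apply, Fintype.sum_sum_type, elim_inl, elim_inr,
    dist_bridgeGraph hG₁ hG₂, bridgeDist]
  push_cast
  simp only [add_mul, sum_add_distrib, mul_sum]
  ring

theorem distMatrix_bridgeGraph_mulVec_eq_const [DecidableEq V₁] [DecidableEq V₂]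
    (hG₁ : G₁.Connected) (hG₂ : G₂.Connected) {w₁ : V₁ → ℝ} {w₂ : V₂ → ℝ} {n₁ n₂ : ℝ}
    (hw₁ : distMatrix G₁ *ᵥ w₁ = fun _ => n₁) (hw₂ : distMatrix G₂ *ᵥ w₂ = fun _ => n₂)
    {c₁ c₂ : ℝ} (hc : c₁ * ∑ a, w₁ a = c₂ * ∑ b, w₂ b)
    (hn : c₁ * n₁ + c₂ * n₂ + c₁ * (∑ a, w₁ a) / 2 = n₁ + n₂) :
    distMatrix (bridgeGraph G₁ G₂ u v) *ᵥ
        Sum.elim (c₁ • w₁ - Pi.single u (c₁ * (∑ a, w₁ a) / 2))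
          (c₂ • w₂ - Pi.single v (c₂ * (∑ b, w₂ b) / 2))
      = fun _ => n₁ + n₂ := by
  ext (a | b)
  · rw [distMatrix_bridgeGraph_mulVec_inl hG₁ hG₂, distMatrix_mulVec_smul_sub_single,
      distMatrix_mulVec_smul_sub_single, hw₁, hw₂, sum_smul_sub_single, dist_self]
    push_cast
    linear_combination hn - ((G₁.dist a u + 1) / 2 : ℝ) * hc
  · rw [distMatrix_bridgeGraph_mulVec_inr hG₁ hG₂, distMatrix_mulVec_smul_sub_single,
      distMatrix_mulVec_smul_sub_single, hw₁, hw₂, sum_smul_sub_single, dist_self]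
    push_cast
    linear_combination hn + (G₂.dist b v / 2 : ℝ) * hc

end Bridge

/-- Explicit values of the curvature of the bridged graph at the endpoints
of the added edge, and the fact that at every other vertex the curvature is a positive
multiple of the original curvature there. -/
theorem stmt_5 {V₁ V₂ : Type*} [Fintype V₁] [Fintype V₂]
    (G₁ : SimpleGraph V₁) (G₂ : SimpleGraph V₂)
    (hG₁ : G₁.Connected) (hG₂ : G₂.Connected)
    (D₁ : Matrix V₁ V₁ ℝ) (hD₁ : ∀ a b, D₁ a b = (G₁.dist a b : ℝ))
    (D₂ : Matrix V₂ V₂ ℝ) (hD₂ : ∀ a b, D₂ a b = (G₂.dist a b : ℝ))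
    (w₁ : V₁ → ℝ) (hw₁0 : ∀ i, 0 ≤ w₁ i)
    (hw₁ : D₁.mulVec w₁ = fun _ => (Fintype.card V₁ : ℝ))
    (w₂ : V₂ → ℝ) (hw₂0 : ∀ i, 0 ≤ w₂ i)
    (hw₂ : D₂.mulVec w₂ = fun _ => (Fintype.card V₂ : ℝ))
    (u : V₁) (v : V₂)
    (n₁ : ℝ) (hn₁ : n₁ = (Fintype.card V₁ : ℝ))
    (n₂ : ℝ) (hn₂ : n₂ = (Fintype.card V₂ : ℝ))
    (L₁ : ℝ) (hL₁ : L₁ = ∑ i, |w₁ i|)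
    (L₂ : ℝ) (hL₂ : L₂ = ∑ i, |w₂ i|) :
    ∃ w : V₁ ⊕ V₂ → ℝ,
      (Matrix.of fun a b => ((bridgeGraph G₁ G₂ u v).dist a b : ℝ)).mulVec w
          = (fun _ => n₁ + n₂) ∧
        w (Sum.inl u)
          = L₂ * (n₁ + n₂) / (n₁ * L₂ + n₂ * L₁ + (1 / 2) * L₁ * L₂)
            * (w₁ u - (1 / 2) * L₁) ∧
        w (Sum.inr v)
          = L₁ * (n₁ + n₂) / (n₁ * L₂ + n₂ * L₁ + (1 / 2) * L₁ * L₂)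
            * (w₂ v - (1 / 2) * L₂) ∧
        (∃ c : ℝ, 0 < c ∧ ∀ x : V₁, x ≠ u → w (Sum.inl x) = c * w₁ x) ∧
        (∃ c : ℝ, 0 < c ∧ ∀ y : V₂, y ≠ v → w (Sum.inr y) = c * w₂ y) := by
  classical
  obtain rfl : D₁ = distMatrix G₁ := Matrix.ext hD₁
  obtain rfl : D₂ = distMatrix G₂ := Matrix.ext hD₂
  rw [← hn₁] at hw₁
  rw [← hn₂] at hw₂
  have : Nonempty V₁ := ⟨u⟩
  have : Nonempty V₂ := ⟨v⟩
  have hn₁pos : 0 < n₁ := hn₁ ▸ Nat.cast_pos.mpr Fintype.card_pos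
  have hn₂pos : 0 < n₂ := hn₂ ▸ Nat.cast_pos.mpr Fintype.card_pos
  obtain rfl : L₁ = ∑ i, w₁ i := hL₁.trans (sum_congr rfl fun i _ => abs_of_nonneg (hw₁0 i))
  obtain rfl : L₂ = ∑ i, w₂ i := hL₂.trans (sum_congr rfl fun i _ => abs_of_nonneg (hw₂0 i))
  have hL₁pos := sum_pos_of_mulVec_eq_const hw₁0 hw₁ hn₁pos.ne'
  have hL₂pos := sum_pos_of_mulVec_eq_const hw₂0 hw₂ hn₂pos.ne'
  set L₁ := ∑ i, w₁ i
  set L₂ := ∑ i, w₂ i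
  have hN : 0 < n₁ * L₂ + n₂ * L₁ + 1 / 2 * L₁ * L₂ := by positivity
  set c₁ := L₂ * (n₁ + n₂) / (n₁ * L₂ + n₂ * L₁ + 1 / 2 * L₁ * L₂)
  set c₂ := L₁ * (n₁ + n₂) / (n₁ * L₂ + n₂ * L₁ + 1 / 2 * L₁ * L₂)
  have hc : c₁ * L₁ = c₂ * L₂ := by ring
  have hn : c₁ * n₁ + c₂ * n₂ + c₁ * L₁ / 2 = n₁ + n₂ := by
    simp only [c₁, c₂]
    field_simp
  refine ⟨_, distMatrix_bridgeGraph_mulVec_eq_const hG₁ hG₂ hw₁ hw₂ hc hn, ?_, ?_,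
    ⟨c₁, by positivity, fun x hx => ?_⟩, ⟨c₂, by positivity, fun y hy => ?_⟩⟩
  · simp only [elim_inl, Pi.sub_apply, Pi.smul_apply, smul_eq_mul, Pi.single_eq_same]
    ring
  · simp only [elim_inr, Pi.sub_apply, Pi.smul_apply, smul_eq_mul, Pi.single_eq_same]
    ring
  · simp [Pi.single_eq_of_ne hx]
  · simp [Pi.single_eq_of_ne hy]
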